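/- Let F_{3,2} : ℝ^5 → ℝ^5 be given by F_{3,2}(x,y,u1,u2,u3) = (x³+y²+u1·x+u2·y+u3·x², x·y, u1, u2, u3). Then for every point q = (x,y,u1,u2,u3) ∈ ℝ^5, the derivative of F_{3,2} at q applied to ξ_4(q) = ((1/2)xy, −(1/2)y²−(1/4)u2·y, −2u3·xy, x³+y²+u1·x+u2·y+u3·x²+(1/4)u2², −(5/2)xy) equals η_4(F_{3,2}(q)), where η_4(X,Y,U1,U2,U3) = ((3/2)U1·Y, −(1/4)U2·Y, −2U3·Y, X+(1/4)U2², −(5/2)Y). In particular η_4 is liftable over F_{3,2}. -/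

import Mathlib

/-- The stable map `F₃₂` of discrete algebra type `B_{3,2}`. -/
noncomputable def F32 : ℝ × ℝ × ℝ × ℝ × ℝ → ℝ × ℝ × ℝ × ℝ × ℝ :=
  fun (x, y, u1, u2, u3) =>
    (x^3 + y^2 + u1*x + u2*y + u3*x^2, x*y, u1, u2, u3)

/-- The vector field `η₄` on the target of `F₃₂`. -/
noncomputable def eta4 : ℝ × ℝ × ℝ × ℝ × ℝ → ℝ × ℝ × ℝ × ℝ × ℝ :=
  fun (X, Y, U1, U2, U3) =>
    ((3/2)*U1*Y, -(1/4)*U2*Y, -2*U3*Y, X + (1/4)*U2^2, -(5/2)*Y)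

/-- The lowerable vector field `ξ₄` on the source of `F₃₂`. -/
noncomputable def xi4 : ℝ × ℝ × ℝ × ℝ × ℝ → ℝ × ℝ × ℝ × ℝ × ℝ :=
  fun (x, y, u1, u2, u3) =>
    ((1/2)*x*y, -(1/2)*y^2 - (1/4)*u2*y, -2*u3*x*y,
     x^3 + y^2 + u1*x + u2*y + u3*x^2 + (1/4)*u2^2, -(5/2)*x*y)

theorem fderiv_F32_apply (x y u1 u2 u3 a b c d e : ℝ) :
    fderiv ℝ F32 (x, y, u1, u2, u3) (a, b, c, d, e) =
      ((3*x^2 + 2*u3*x + u1)*a + (2*y + u2)*b + x*c + y*d + x^2*e, y*a + x*b, c, d, e) := by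
  set q : ℝ × ℝ × ℝ × ℝ × ℝ := (x, y, u1, u2, u3)
  have hx := hasFDerivAt_fst (𝕜 := ℝ) (p := q)
  have hr := hasFDerivAt_snd (𝕜 := ℝ) (p := q)
  have hy := hr.fst
  have hu1 := hr.snd.fst
  have hu2 := hr.snd.snd.fst
  have hu3 := hr.snd.snd.snd
  -- `F32`'s pattern-matching definition unfolds to this expression in projections by structure eta.
  have hF : HasFDerivAt F32 _ q :=
    ((hx.pow 3).add (hy.pow 2) |>.add (hu1.mul hx) |>.add (hu2.mul hy) |>.add (hu3.mul (hx.pow 2))).prodMk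
      ((hx.mul hy).prodMk (hu1.prodMk (hu2.prodMk hu3)))
  rw [hF.fderiv]
  simp only [Nat.add_one_sub_one, nsmul_eq_mul, Nat.cast_ofNat, pow_one, ContinuousLinearMap.prod_apply,
    add_apply, smul_apply, ContinuousLinearMap.coe_fst', smul_eq_mul, ContinuousLinearMap.comp_apply, ContinuousLinearMap.coe_snd', Prod.mk.injEq, and_true, q]
  constructor <;> ring

/-- `η₄` is liftable over `F₃₂` via `ξ₄`:
for every `q`, `d(F₃₂)_q (ξ₄ q) = η₄ (F₃₂ q)`. -/
theorem eta4_liftable_over_F32 :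
    ∀ q : ℝ × ℝ × ℝ × ℝ × ℝ, fderiv ℝ F32 q (xi4 q) = eta4 (F32 q) := by
  rintro ⟨x, y, u1, u2, u3⟩
  rw [xi4, fderiv_F32_apply, F32, eta4]
  ext <;> simp only <;> ring
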